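/- The complex singular set of the cross-ratio variety satisfies 𝔛_ℂ = {(x₁,x₂,x₃) ∈ 𝔛 : x₃ real and x₃ > 0} ∪ 𝔛_ℝ, where 𝔛_ℂ = {(x₁,x₂,x₃) ∈ 𝔛 : Im(x₃) = 0}. Equivalently: for (x₁,x₂,x₃) ∈ 𝔛 with Im(x₃) = 0 and x₃ < 0, the coordinates x₁ and x₂ are real with x₁ + x₂ = 1 and x₃ = −x₂/x₁, so the point lies in 𝔛_ℝ. -/

import Mathlib

noncomputable section

open Complex

/-- Falbel's cross-ratio variety 𝔛 as a subset of ℂ³. -/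
def Xvar : Set (ℂ × ℂ × ℂ) :=
  {x | x.1 ≠ 0 ∧ x.2.1 ≠ 0 ∧ x.2.2 ≠ 0 ∧
    ‖x.2.1‖ = ‖x.1‖ * ‖x.2.2‖ ∧
    2 * (‖x.1‖) ^ 2 * x.2.2.re =
      (‖x.1‖) ^ 2 + (‖x.2.1‖) ^ 2
        - 2 * x.1.re - 2 * x.2.1.re + 1}

/-- The real singular set 𝔛_ℝ. -/
def XR : Set (ℂ × ℂ × ℂ) :=
  {x | x ∈ Xvar ∧ x.1.im = 0 ∧ x.2.1.im = 0 ∧ x.2.2.im = 0 ∧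
    x.1 + x.2.1 = 1 ∧ 1 / x.2.1 + 1 / x.2.2 = 1 ∧ x.2.2 + 1 / x.1 = 1}

/-- The complex singular set 𝔛_ℂ. -/
def XC : Set (ℂ × ℂ × ℂ) := {x ∈ Xvar | x.2.2.im = 0}

/-!
If `x₃ = -t` with `t > 0`, then `|x₂| = t|x₁|` turns the second equation of 𝔛 into
`(|x₁| + |x₂|)² + 1 = 2 (Re x₁ + Re x₂)`. Since `Re z ≤ |z|`, this forces
`(|x₁| + |x₂| - 1)² ≤ 0`, so `|x₁| + |x₂| = 1` and `Re xᵢ = |xᵢ|`: both `x₁` and `x₂` are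
positive reals summing to `1`, and `x₃ = -|x₂|/|x₁| = -x₂/x₁`.
-/

lemma re_eq_norm_of_sq_norm_add_norm_add_one_eq {a b : ℂ}
    (h : (‖a‖ + ‖b‖) ^ 2 + 1 = 2 * (a.re + b.re)) :
    a.re = ‖a‖ ∧ b.re = ‖b‖ ∧ ‖a‖ + ‖b‖ = 1 := by
  have ha := re_le_norm a
  have hb := re_le_norm b
  have hsum : ‖a‖ + ‖b‖ = 1 := by nlinarith [sq_nonneg (‖a‖ + ‖b‖ - 1)]
  rw [hsum] at h
  exact ⟨by linarith, by linarith, hsum⟩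

lemma im_eq_zero_of_re_eq_norm {z : ℂ} (h : z.re = ‖z‖) : z.im = 0 :=
  abs_re_eq_norm.1 (by rw [h, abs_norm])

lemma one_div_add_one_div_eq_one_of_add_eq_one {a b c : ℂ} (ha : a ≠ 0) (hb : b ≠ 0)
    (hab : a + b = 1) (hc : c = -b / a) :
    1 / b + 1 / c = 1 ∧ c + 1 / a = 1 := by
  subst hc
  constructor <;> field_simp <;> linear_combination -hab

namespace Xvar

variable {x : ℂ × ℂ × ℂ}

lemma sq_norm_add_norm_add_one_eq (hx : x ∈ Xvar) (him : x.2.2.im = 0) (hneg : x.2.2.re < 0) :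
    (‖x.1‖ + ‖x.2.1‖) ^ 2 + 1 = 2 * (x.1.re + x.2.1.re) := by
  obtain ⟨-, -, -, habs, heq⟩ := hx
  rw [← abs_re_eq_norm.2 him, abs_of_neg hneg] at habs
  linear_combination -heq + 2 * ‖x.1‖ * habs

lemma mem_XR_of_re_neg (hx : x ∈ Xvar) (him : x.2.2.im = 0) (hneg : x.2.2.re < 0) :
    x.1.im = 0 ∧ x.2.1.im = 0 ∧ x.1 + x.2.1 = 1 ∧ x.2.2 = -x.2.1 / x.1 ∧ x ∈ XR := by
  obtain ⟨ha, hb, -, habs, -⟩ := id hx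
  obtain ⟨hre₁, hre₂, hsum⟩ :=
    re_eq_norm_of_sq_norm_add_norm_add_one_eq (sq_norm_add_norm_add_one_eq hx him hneg)
  have him₁ := im_eq_zero_of_re_eq_norm hre₁
  have him₂ := im_eq_zero_of_re_eq_norm hre₂
  rw [← abs_re_eq_norm.2 him, abs_of_neg hneg, ← hre₁, ← hre₂] at habs
  have hab : x.1 + x.2.1 = 1 := Complex.ext (by simp [hre₁, hre₂, hsum]) (by simp [him₁, him₂])
  have hc : x.2.2 = -x.2.1 / x.1 := by
    rw [eq_div_iff ha]
    apply Complex.ext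
    · simp only [mul_re, him, him₁, mul_zero, sub_zero, neg_re, habs]
      ring
    · simp [him₁, him₂, him]
  exact ⟨him₁, him₂, hab, hc, hx, him₁, him₂, him, hab,
    one_div_add_one_div_eq_one_of_add_eq_one ha hb hab hc⟩

end Xvar

/-- `𝔛_ℂ = {x ∈ 𝔛 : x₃ real and positive} ∪ 𝔛_ℝ`; equivalently, a point of 𝔛
with `x₃` real and negative lies in 𝔛_ℝ, with `x₁, x₂` real, `x₁ + x₂ = 1` and
`x₃ = −x₂/x₁`. -/
theorem complex_singular_set :
    XC = {x ∈ Xvar | x.2.2.im = 0 ∧ 0 < x.2.2.re} ∪ XR ∧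
    (∀ x ∈ Xvar, x.2.2.im = 0 → x.2.2.re < 0 →
      x.1.im = 0 ∧ x.2.1.im = 0 ∧ x.1 + x.2.1 = 1 ∧
      x.2.2 = -x.2.1 / x.1 ∧ x ∈ XR) := by
  refine ⟨?_, fun x hx him hneg ↦ Xvar.mem_XR_of_re_neg hx him hneg⟩
  ext x
  simp only [XC, Set.mem_union, Set.mem_ofPred_eq]
  constructor
  · rintro ⟨hx, him⟩
    rcases lt_trichotomy x.2.2.re 0 with hneg | hzero | hpos
    · exact Or.inr (Xvar.mem_XR_of_re_neg hx him hneg).2.2.2.2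
    · exact absurd (Complex.ext hzero him) hx.2.2.1
    · exact Or.inl ⟨hx, him, hpos⟩
  · rintro (⟨hx, him, -⟩ | hx)
    · exact ⟨hx, him⟩
    · exact ⟨hx.1, hx.2.2.2.1⟩
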